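/- Let G, R : ℝ → ℝ, let c, α ∈ ℝ and g_c > 0 with G(c) = α, and suppose there exist δ > 0 and C ≥ 0 such that for all x with |x - c| ≤ δ one has |G(x) - α - g_c (x - c)| ≤ C (x - c)² and |R(x) - R(c)| ≤ C |x - c|. Let (G_n) be a sequence of functions ℝ → ℝ with sup_{x ∈ ℝ} |G_n(x) - G(x) + n^{-1} R(x)| = O(n^{-2}), and let (x_n) be a real sequence with x_n → c and G_n(x_n) = α for all n. Then x_n = c + n^{-1} R(c)/g_c + O(n^{-2}) as n → ∞. -/
import Mathlib


open Filter Asymptotics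

/-- Cornish–Fisher-type inversion: if `G c = α` with `g_c > 0`,
`G` has a first-order expansion at `c` with quadratic error and `R` is Lipschitz at `c`,
`sup_x |Gₙ x - G x + n⁻¹ R x| = O(n⁻²)`, `x n → c` and `Gₙ (x n) = α` for all `n`, then
`x n = c + n⁻¹ R(c)/g_c + O(n⁻²)`. -/
theorem stmt14 (G R : ℝ → ℝ) (c α gc : ℝ) (hgc : 0 < gc) (hGc : G c = α)
    (hloc : ∃ δ > (0 : ℝ), ∃ C ≥ (0 : ℝ), ∀ x : ℝ, |x - c| ≤ δ →
      |G x - α - gc * (x - c)| ≤ C * (x - c) ^ 2 ∧ |R x - R c| ≤ C * |x - c|)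
    (Gn : ℕ → ℝ → ℝ)
    (hGn : ∃ C₂ : ℝ, ∀ᶠ n : ℕ in atTop, ∀ x : ℝ,
      |Gn n x - G x + (n : ℝ)⁻¹ * R x| ≤ C₂ * (n : ℝ) ^ (-(2 : ℝ)))
    (x : ℕ → ℝ) (hx : Tendsto x atTop (nhds c)) (hroot : ∀ n : ℕ, Gn n (x n) = α) :
    (fun n : ℕ => x n - (c + (n : ℝ)⁻¹ * (R c / gc))) =O[atTop]
      fun n => (n : ℝ) ^ (-(2 : ℝ)) := by
  obtain ⟨δ, hδ, C, hC, hloc⟩ := hloc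
  obtain ⟨C₂, hGn⟩ := hGn
  set M : ℝ := |R c| + C * δ + |C₂| with hM
  have hM0 : 0 ≤ M := by positivity
  clear_value M
  rw [isBigO_iff]
  refine ⟨(C * (2 * M / gc) + |C₂| + C * (2 * M / gc) ^ 2) / gc, ?_⟩
  have h1ev : ∀ᶠ n in atTop, |x n - c| ≤ δ := by
    filter_upwards [Metric.tendsto_nhds.mp hx δ hδ] with n hn
    rw [Real.dist_eq] at hn; linarith
  have h2ev : ∀ᶠ n in atTop, C * |x n - c| ≤ gc / 2 := by
    have hε : (0:ℝ) < gc / (2 * C + 2) := by positivity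
    filter_upwards [Metric.tendsto_nhds.mp hx _ hε] with n hn
    rw [Real.dist_eq] at hn
    have h1 : C * |x n - c| ≤ C * (gc / (2 * C + 2)) :=
      mul_le_mul_of_nonneg_left hn.le hC
    have h2 : C * (gc / (2 * C + 2)) ≤ gc / 2 := by
      rw [show C * (gc / (2 * C + 2)) = (C * gc) / (2 * C + 2) by ring,
        div_le_div_iff₀ (by positivity) (by norm_num)]
      nlinarith
    linarith
  filter_upwards [h1ev, h2ev, hGn, eventually_ge_atTop 1] with n hδn h2n hGnn hn1
  have hn0 : (0:ℝ) < (n:ℝ) := by exact_mod_cast hn1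
  set e : ℝ := x n - c with he
  set inv : ℝ := (n:ℝ)⁻¹ with hinv
  have hinv0 : 0 ≤ inv := by positivity
  have hinv1 : inv ≤ 1 := by
    rw [hinv, inv_le_one_iff₀]; right; exact_mod_cast hn1
  have hr2 : ((n:ℝ)) ^ (-(2:ℝ)) = inv * inv := by
    rw [show (-(2:ℝ)) = (-1) + (-1) by norm_num, Real.rpow_add hn0,
      Real.rpow_neg_one]
  -- basic bounds
  have hB := (hloc (x n) hδn).1
  have hD := (hloc (x n) hδn).2
  rw [← he] at hB hD
  have hA : |α - G (x n) + inv * R (x n)| ≤ |C₂| * (inv * inv) := by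
    have h := hGnn (x n)
    rw [hroot n, hr2] at h
    exact h.trans (mul_le_mul_of_nonneg_right (le_abs_self C₂) (by positivity))
  have hGne : x n = c + e := by rw [he]; ring
  rw [hGne] at hB hD hA
  clear_value e inv
  have key : |gc * e - inv * R c| ≤ inv * (C * |e|) + |C₂| * (inv * inv) + C * e ^ 2 := by
    have hid : gc * e - inv * R c =
        inv * (R (c + e) - R c) - (α - G (c + e) + inv * R (c + e)) -
          (G (c + e) - α - gc * e) := by ring
    have t1 : |inv * (R (c + e) - R c)| ≤ inv * (C * |e|) := by
      rw [abs_mul, abs_of_nonneg hinv0]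
      exact mul_le_mul_of_nonneg_left hD hinv0
    rw [hid]
    calc |inv * (R (c + e) - R c) - (α - G (c + e) + inv * R (c + e)) - (G (c + e) - α - gc * e)|
        ≤ |inv * (R (c + e) - R c) - (α - G (c + e) + inv * R (c + e))| +
            |G (c + e) - α - gc * e| := abs_sub _ _
      _ ≤ (|inv * (R (c + e) - R c)| + |α - G (c + e) + inv * R (c + e)|) +
            |G (c + e) - α - gc * e| := by
          have := abs_sub (inv * (R (c + e) - R c)) (α - G (c + e) + inv * R (c + e))
          linarith
      _ ≤ inv * (C * |e|) + |C₂| * (inv * inv) + C * e ^ 2 := by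
          have := add_le_add (add_le_add t1 hA) hB
          linarith
  -- step 1 : |e| ≤ (2M/gc) * inv
  have habs : |gc * e| = gc * |e| := by rw [abs_mul, abs_of_pos hgc]
  have triangle : gc * |e| ≤ |gc * e - inv * R c| + inv * |R c| := by
    rw [← habs]
    calc |gc * e| = |(gc * e - inv * R c) + inv * R c| := by ring_nf
      _ ≤ |gc * e - inv * R c| + |inv * R c| := abs_add_le _ _
      _ = |gc * e - inv * R c| + inv * |R c| := by rw [abs_mul, abs_of_nonneg hinv0]
  have step1 : gc * |e| ≤ 2 * M * inv := by
    have hCe2 : C * e ^ 2 ≤ (gc / 2) * |e| := by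
      have h' : C * e ^ 2 = C * |e| * |e| := by rw [← sq_abs e]; ring
      rw [h']
      exact mul_le_mul_of_nonneg_right h2n (abs_nonneg e)
    have hiCe : inv * (C * |e|) ≤ inv * (C * δ) :=
      mul_le_mul_of_nonneg_left (mul_le_mul_of_nonneg_left hδn hC) hinv0
    have hC2i : |C₂| * (inv * inv) ≤ |C₂| * inv := by
      apply mul_le_mul_of_nonneg_left _ (abs_nonneg C₂)
      nlinarith
    rw [hM]
    linarith
  have he1 : |e| ≤ (2 * M / gc) * inv := by
    rw [div_mul_eq_mul_div, le_div_iff₀ hgc]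
    linarith
  -- step 2 : final quadratic bound
  have step2 : |gc * e - inv * R c| ≤
      (C * (2 * M / gc) + |C₂| + C * (2 * M / gc) ^ 2) * (inv * inv) := by
    have h1 : inv * (C * |e|) ≤ C * (2 * M / gc) * (inv * inv) := by
      have h := mul_le_mul_of_nonneg_left (mul_le_mul_of_nonneg_left he1 hC) hinv0
      nlinarith
    have h2 : C * e ^ 2 ≤ C * (2 * M / gc) ^ 2 * (inv * inv) := by
      have hsq : e ^ 2 ≤ ((2 * M / gc) * inv) ^ 2 := by
        rw [← sq_abs e]
        exact pow_le_pow_left₀ (abs_nonneg e) he1 2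
      have h := mul_le_mul_of_nonneg_left hsq hC
      nlinarith
    linarith
  have harg : gc * (x n - (c + inv * (R c / gc))) = gc * e - inv * R c := by
    rw [he]
    field_simp
    ring
  have hfin : gc * |x n - (c + inv * (R c / gc))| = |gc * e - inv * R c| := by
    rw [← harg, abs_mul, abs_of_pos hgc]
  rw [Real.norm_eq_abs, Real.norm_eq_abs, hr2,
    abs_of_nonneg (mul_nonneg hinv0 hinv0), div_mul_eq_mul_div, le_div_iff₀ hgc]
  calc |x n - (c + inv * (R c / gc))| * gc
      = gc * |x n - (c + inv * (R c / gc))| := mul_comm _ _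
    _ = |gc * e - inv * R c| := hfin
    _ ≤ (C * (2 * M / gc) + |C₂| + C * (2 * M / gc) ^ 2) * (inv * inv) := step2
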